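/- Under the hypotheses of the objective-collapse theorem, if additionally L has a unique well-separated minimiser θ̂ — meaning inf_{d(θ,θ̂) ≥ η} L(θ) − L(θ̂) > 0 for every η > 0 on a metric space (Θ,d) — then the minimisers q_γ converge weakly to the Dirac measure δ_{θ̂} as γ → 0. -/

import Mathlib

open MeasureTheory ProbabilityTheory Filter

/-!
Comparing the minimiser `q_γ` with `π` conditioned on the sublevel set `A_δ = {L ≤ L* + δ}`,
whose divergence from `π` is `KL(π[|A_δ] ‖ π) = -log π(A_δ)`, and using Gibbs' inequality
`KL ≥ 0`, gives `E_{q_γ}[L] ≤ L* + δ - γ log π(A_δ)`; hence `E_{q_γ}[L] → L*` as `γ → 0`.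
Well-separation and Markov's inequality then show that `q_γ` gives vanishing mass to the
complement of every ball around `θ̂`, and for a bounded continuous `g` this forces
`∫ g dq_γ → g θ̂`.
-/

/-- Kullback–Leibler divergence `KL(q‖π) = ∫ log (dq/dπ) dq` (for `q ≪ π`). -/
noncomputable def KL {Θ : Type*} [MeasurableSpace Θ] (q π : Measure Θ) : ℝ :=
  ∫ θ, llr q π θ ∂q

/-- The SoU / Gibbs objective `J_γ(q) = E_q[L] + γ·KL(q‖π)`. -/
noncomputable def Jobj {Θ : Type*} [MeasurableSpace Θ] (L : Θ → ℝ) (π : Measure Θ)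
    (γ : ℝ) (q : Measure Θ) : ℝ :=
  ∫ θ, L θ ∂q + γ * KL q π

section DivergenceBounds

variable {Θ : Type*} [MeasurableSpace Θ]

lemma KL_nonneg {q π : Measure Θ} [IsProbabilityMeasure q] [IsProbabilityMeasure π]
    (hqπ : q ≪ π) : 0 ≤ KL q π := by
  by_cases hint : Integrable (llr q π) q
  · simpa [KL] using InformationTheory.integral_llr_add_sub_measure_univ_nonneg hqπ hint
  · exact (integral_undef hint).ge

lemma KL_cond_self {π : Measure Θ} [IsFiniteMeasure π] {A : Set Θ} (hA : MeasurableSet A)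
    (hπA : π A ≠ 0) : KL π[|A] π = -Real.log (π.real A) := by
  have : IsProbabilityMeasure π[|A] := cond_isProbabilityMeasure hπA
  have hrn : (π[|A]).rnDeriv π =ᵐ[π] (π A)⁻¹ • A.indicator 1 := by
    filter_upwards [Measure.rnDeriv_smul_left_of_ne_top (π.restrict A) π
      (ENNReal.inv_ne_top.2 hπA), π.rnDeriv_restrict_self hA] with θ hsmul hres
    rw [ProbabilityTheory.cond, hsmul, Pi.smul_apply, Pi.smul_apply, hres]
  have hllr : llr π[|A] π =ᵐ[π[|A]] fun _ => -Real.log (π.real A) := by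
    filter_upwards [cond_absolutelyContinuous.ae_le hrn, ae_cond_mem hA] with θ hθ hθA
    simp [llr, hθ, hθA, measureReal_def, Real.log_inv]
  simp [KL, integral_congr_ae hllr]

lemma integral_le_integral_add_mul_KL_of_Jobj_le {L : Θ → ℝ} {π q q' : Measure Θ}
    [IsProbabilityMeasure π] [IsProbabilityMeasure q] {γ : ℝ} (hγ : 0 ≤ γ) (hqπ : q ≪ π)
    (hmin : Jobj L π γ q ≤ Jobj L π γ q') : ∫ θ, L θ ∂q ≤ ∫ θ, L θ ∂q' + γ * KL q' π := by
  have := mul_nonneg hγ (KL_nonneg hqπ)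
  unfold Jobj at hmin
  linarith

lemma integral_cond_setOf_le_le {μ : Measure Θ} [IsFiniteMeasure μ] {f : Θ → ℝ}
    (hf : Measurable f) {a b : ℝ} (ha : ∀ x, a ≤ f x) (hμ : μ {x | f x ≤ b} ≠ 0) :
    ∫ x, f x ∂μ[|{x | f x ≤ b}] ≤ b := by
  have : IsProbabilityMeasure μ[|{x | f x ≤ b}] := cond_isProbabilityMeasure hμ
  have hle : ∀ᵐ x ∂μ[|{x | f x ≤ b}], f x ≤ b :=
    ae_cond_mem (measurableSet_le hf measurable_const)
  have hint : Integrable f μ[|{x | f x ≤ b}] :=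
    .of_bound hf.aestronglyMeasurable (max |a| |b|)
      (by filter_upwards [hle] with x hx using abs_le_max_abs_abs (ha x) hx)
  simpa using integral_mono_ae hint (integrable_const b) hle

lemma integral_le_sub_mul_log_of_isMinimizer {L : Θ → ℝ} (hL : Measurable L) {a : ℝ}
    (ha : ∀ θ, a ≤ L θ) {π q : Measure Θ} [IsProbabilityMeasure π] [IsProbabilityMeasure q]
    (hqπ : q ≪ π) {γ : ℝ} (hγ : 0 ≤ γ)
    (hmin : ∀ q' : Measure Θ, IsProbabilityMeasure q' → q' ≪ π → Jobj L π γ q ≤ Jobj L π γ q')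
    {b : ℝ} (hb : π {θ | L θ ≤ b} ≠ 0) :
    ∫ θ, L θ ∂q ≤ b - γ * Real.log (π.real {θ | L θ ≤ b}) := by
  have hmeas : MeasurableSet {θ | L θ ≤ b} := measurableSet_le hL measurable_const
  have hcomp := integral_le_integral_add_mul_KL_of_Jobj_le hγ hqπ
    (hmin _ (cond_isProbabilityMeasure hb) cond_absolutelyContinuous)
  rw [KL_cond_self hmeas hb] at hcomp
  linarith [integral_cond_setOf_le_le hL ha hb]

end DivergenceBounds

lemma tendsto_of_le_of_forall_le_add_mul {ι : Type*} {l : Filter ι} {u γ : ι → ℝ} {a : ℝ}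
    (hγ : Tendsto γ l (nhds 0)) (hlow : ∀ i, a ≤ u i)
    (hup : ∀ δ > 0, ∃ C, ∀ i, u i ≤ a + δ + γ i * C) : Tendsto u l (nhds a) := by
  refine tendsto_order.2 ⟨fun b hb => .of_forall fun i => hb.trans_le (hlow i), fun b hb => ?_⟩
  obtain ⟨C, hC⟩ := hup ((b - a) / 2) (by linarith)
  have hγC : Tendsto (fun i => γ i * C) l (nhds 0) := by simpa using hγ.mul_const C
  filter_upwards [hγC.eventually_lt_const (by linarith : (0 : ℝ) < (b - a) / 2)] with i hi
  linarith [hC i]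

lemma tendsto_measureReal_of_tendsto_integral {Θ ι : Type*} [MeasurableSpace Θ] {l : Filter ι}
    {μ : ι → Measure Θ} [∀ i, IsProbabilityMeasure (μ i)] {f : Θ → ℝ} {c Δ : ℝ} (hΔ : 0 < Δ)
    (hfc : ∀ x, c ≤ f x) (hint : ∀ i, Integrable f (μ i))
    (hlim : Tendsto (fun i => ∫ x, f x ∂μ i) l (nhds c)) {S : Set Θ}
    (hS : S ⊆ {x | c + Δ ≤ f x}) : Tendsto (fun i => (μ i).real S) l (nhds 0) := by
  have hmarkov : ∀ i, (μ i).real S ≤ (∫ x, f x ∂μ i - c) / Δ := by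
    intro i
    have := mul_meas_ge_le_integral_of_nonneg (.of_forall fun x => sub_nonneg.2 (hfc x))
      ((hint i).sub (integrable_const c)) Δ
    rw [integral_sub (hint i) (integrable_const c), integral_const, probReal_univ,
      one_smul] at this
    rw [le_div_iff₀ hΔ, mul_comm]
    refine le_trans (mul_le_mul_of_nonneg_left (measureReal_mono ?_) hΔ.le) this
    exact hS.trans fun x hx => by simp only [Set.mem_ofPred_eq] at hx ⊢; linarith
  refine squeeze_zero (fun i => measureReal_nonneg) hmarkov ?_
  simpa using (hlim.sub_const c).div_const Δ

section WeakConvergence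

variable {X : Type*} [PseudoMetricSpace X] [MeasurableSpace X] [OpensMeasurableSpace X]

lemma dist_integral_le_add_mul_measureReal_compl_ball {μ : Measure X} [IsProbabilityMeasure μ]
    (g : BoundedContinuousFunction X ℝ) {x : X} {η ε : ℝ} (hε : 0 ≤ ε)
    (hg : ∀ y ∈ Metric.ball x η, dist (g y) (g x) ≤ ε) :
    dist (∫ y, g y ∂μ) (g x) ≤ ε + 2 * ‖g‖ * μ.real (Metric.ball x η)ᶜ := by
  have hS : MeasurableSet (Metric.ball x η)ᶜ := Metric.isOpen_ball.measurableSet.compl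
  have hpt : ∀ y, ‖g y - g x‖ ≤ ε + (Metric.ball x η)ᶜ.indicator (fun _ => 2 * ‖g‖) y := by
    intro y
    rw [← dist_eq_norm]
    by_cases hy : y ∈ Metric.ball x η
    · simpa [hy] using hg y hy
    · simpa [hy] using (g.dist_le_two_norm y x).trans (le_add_of_nonneg_left hε)
  have hint : Integrable (fun y => ε + (Metric.ball x η)ᶜ.indicator (fun _ => 2 * ‖g‖) y) μ :=
    (integrable_const ε).add ((integrable_const _).indicator hS)
  calc dist (∫ y, g y ∂μ) (g x) = ‖∫ y, (g y - g x) ∂μ‖ := by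
        rw [dist_eq_norm, integral_sub (g.integrable μ) (integrable_const _)]
        simp
    _ ≤ ∫ y, (ε + (Metric.ball x η)ᶜ.indicator (fun _ => 2 * ‖g‖) y) ∂μ :=
        norm_integral_le_of_norm_le hint (.of_forall hpt)
    _ = ε + 2 * ‖g‖ * μ.real (Metric.ball x η)ᶜ := by
        rw [integral_add (integrable_const ε) ((integrable_const _).indicator hS),
          integral_indicator_const _ hS]
        simp [mul_comm]

lemma tendsto_integral_of_tendsto_measureReal_compl_ball {ι : Type*} {l : Filter ι}
    {μ : ι → Measure X} [∀ i, IsProbabilityMeasure (μ i)] {x : X}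
    (h : ∀ η > 0, Tendsto (fun i => (μ i).real (Metric.ball x η)ᶜ) l (nhds 0))
    (g : BoundedContinuousFunction X ℝ) :
    Tendsto (fun i => ∫ y, g y ∂μ i) l (nhds (g x)) := by
  refine Metric.tendsto_nhds.2 fun ε hε => ?_
  obtain ⟨η, hη, hgη⟩ := Metric.continuousAt_iff.1 (g.continuous.continuousAt (x := x)) (ε / 2)
    (half_pos hε)
  have htail : Tendsto (fun i => 2 * ‖g‖ * (μ i).real (Metric.ball x η)ᶜ) l (nhds 0) := by
    simpa using (h η hη).const_mul (2 * ‖g‖)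
  filter_upwards [htail.eventually_lt_const (half_pos hε)] with i hi
  have := dist_integral_le_add_mul_measureReal_compl_ball (μ := μ i) g (half_pos hε).le
    fun y hy => (hgη (Metric.mem_ball.1 hy)).le
  linarith

end WeakConvergence

theorem objective_collapse_dirac_general {Θ : Type*} [MetricSpace Θ] [MeasurableSpace Θ]
    [BorelSpace Θ]
    (π : Measure Θ) [IsProbabilityMeasure π]
    (L : Θ → ℝ) (hL : Measurable L)
    (Lstar : ℝ) (hglb : IsGLB (Set.range L) Lstar)
    (hπ : ∀ δ : ℝ, 0 < δ → 0 < π {θ | L θ ≤ Lstar + δ})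
    (γ : ℕ → ℝ) (hγpos : ∀ m, 0 < γ m) (hγ0 : Tendsto γ atTop (nhds 0))
    (q : ℕ → Measure Θ) (hqprob : ∀ m, IsProbabilityMeasure (q m))
    (hqac : ∀ m, q m ≪ π)
    (hqint : ∀ m, Integrable L (q m))
    (hmin : ∀ m, ∀ q' : Measure Θ, IsProbabilityMeasure q' → q' ≪ π →
      Jobj L π (γ m) (q m) ≤ Jobj L π (γ m) q')
    (θhat : Θ) (hθhat : ∀ θ, L θhat ≤ L θ)
    (hsep : ∀ η : ℝ, 0 < η → ∃ Δ : ℝ, 0 < Δ ∧ ∀ θ, η ≤ dist θ θhat → L θhat + Δ ≤ L θ) :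
    ∀ g : BoundedContinuousFunction Θ ℝ,
      Tendsto (fun m => ∫ θ, g θ ∂(q m)) atTop (nhds (g θhat)) := by
  obtain rfl : Lstar = L θhat :=
    hglb.unique (IsLeast.isGLB ⟨⟨θhat, rfl⟩, Set.forall_mem_range.2 hθhat⟩)
  have hloss : Tendsto (fun m => ∫ θ, L θ ∂q m) atTop (nhds (L θhat)) := by
    refine tendsto_of_le_of_forall_le_add_mul hγ0
      (fun m => by simpa using integral_mono (integrable_const _) (hqint m) hθhat)
      fun δ hδ => ⟨-Real.log (π.real {θ | L θ ≤ L θhat + δ}), fun m => ?_⟩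
    have := integral_le_sub_mul_log_of_isMinimizer hL hθhat (hqac m) (hγpos m).le (hmin m)
      (hπ δ hδ).ne'
    linarith
  refine tendsto_integral_of_tendsto_measureReal_compl_ball fun η hη => ?_
  obtain ⟨Δ, hΔ, hfar⟩ := hsep η hη
  exact tendsto_measureReal_of_tendsto_integral hΔ hθhat hqint hloss
    fun θ hθ => hfar θ (not_lt.1 hθ)

/-- Objective collapse, part 3: if `L` has a unique well-separated minimiser `θ̂`, the
minimisers `q_γ` converge weakly to the Dirac measure at `θ̂` as `γ → 0`. -/
theorem objective_collapse_dirac {Θ : Type*} [MetricSpace Θ] [MeasurableSpace Θ]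
    [BorelSpace Θ]
    (π : Measure Θ) [IsProbabilityMeasure π]
    (L : Θ → ℝ) (hL : Measurable L)
    (Lstar : ℝ) (hglb : IsGLB (Set.range L) Lstar)
    (hπ : ∀ δ : ℝ, 0 < δ → 0 < π {θ | L θ ≤ Lstar + δ})
    (γ : ℕ → ℝ) (hγpos : ∀ m, 0 < γ m) (hγ0 : Tendsto γ atTop (nhds 0))
    (q : ℕ → Measure Θ) (hqprob : ∀ m, IsProbabilityMeasure (q m))
    (hqac : ∀ m, q m ≪ π)
    (hqint : ∀ m, Integrable L (q m)) (hqllr : ∀ m, Integrable (llr (q m) π) (q m))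
    (hmin : ∀ m, ∀ q' : Measure Θ, IsProbabilityMeasure q' → q' ≪ π →
      Jobj L π (γ m) (q m) ≤ Jobj L π (γ m) q')
    (θhat : Θ) (hθhat : ∀ θ, L θhat ≤ L θ)
    (hsep : ∀ η : ℝ, 0 < η → ∃ Δ : ℝ, 0 < Δ ∧ ∀ θ, η ≤ dist θ θhat → L θhat + Δ ≤ L θ) :
    ∀ g : BoundedContinuousFunction Θ ℝ,
      Tendsto (fun m => ∫ θ, g θ ∂(q m)) atTop (nhds (g θhat)) :=
  objective_collapse_dirac_general π L hL Lstar hglb hπ γ hγpos hγ0 q hqprob hqac hqint hmin θhat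
    hθhat hsep
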